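/- arXiv:2304.11634 — 6 statements merged into one kernel-verified Lean document; each statement's English description precedes it below -/
import Mathlib

section
/- Let A_1,...,A_n be m×m nonnegative matrices each having at least one strictly positive entry per row, and let u_1,...,u_n be strictly positive vectors in R^m. Then the product ∏_{i=1}^n A_i D(u_i) can be written as D(w) Q where w ∈ R^m is a strictly positive vector and Q is an m×m stochastic matrix. -/
open Matrix

/-- A square matrix is (row-)stochastic if it is nonnegative and every row sums to 1. -/
def IsStochastic {m : ℕ} (M : Matrix (Fin m) (Fin m) ℝ) : Prop :=
  (∀ i j, 0 ≤ M i j) ∧ ∀ i, ∑ j, M i j = 1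

def Good {m : ℕ} (M : Matrix (Fin m) (Fin m) ℝ) : Prop :=
  (∀ i j, 0 ≤ M i j) ∧ ∀ i, 0 < ∑ j, M i j

lemma Good.mul {m : ℕ} {P R : Matrix (Fin m) (Fin m) ℝ} (hP : Good P) (hR : Good R) :
    Good (P * R) := by
  constructor
  · intro i j
    rw [Matrix.mul_apply]
    exact Finset.sum_nonneg fun k _ => mul_nonneg (hP.1 i k) (hR.1 k j)
  · intro i
    have : ∑ j, (P * R) i j = ∑ k, P i k * ∑ j, R k j := by
      simp [Matrix.mul_apply, Finset.mul_sum]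
      rw [Finset.sum_comm]
    rw [this]
    obtain ⟨k, -, hk⟩ := Finset.exists_lt_of_sum_lt (by simpa using hP.2 i :
      ∑ k : Fin m, (0:ℝ) < ∑ k, P i k)
    exact Finset.sum_pos' (fun k _ => mul_nonneg (hP.1 i k) (le_of_lt (hR.2 k)))
      ⟨k, Finset.mem_univ k, mul_pos hk (hR.2 k)⟩

lemma Good.one {m : ℕ} : Good (1 : Matrix (Fin m) (Fin m) ℝ) := by
  constructor
  · intro i j
    by_cases h : i = j <;> simp [Matrix.one_apply, h]
  · intro i
    simp [Matrix.one_apply]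

theorem prod_eq_diagonal_mul_stochastic {m n : ℕ}
    (A : Fin n → Matrix (Fin m) (Fin m) ℝ)
    (hA : ∀ i, ∀ k l, 0 ≤ A i k l)
    (hrow : ∀ i, ∀ k, ∃ l, 0 < A i k l)
    (u : Fin n → Fin m → ℝ) (hu : ∀ i j, 0 < u i j) :
    ∃ (w : Fin m → ℝ) (Q : Matrix (Fin m) (Fin m) ℝ),
      (∀ j, 0 < w j) ∧ IsStochastic Q ∧
      (List.ofFn (fun i : Fin n => A i * Matrix.diagonal (u i))).prod =
        Matrix.diagonal w * Q := by
  set P := (List.ofFn (fun i : Fin n => A i * Matrix.diagonal (u i))).prod with hPdef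
  have hGood : Good P := by
    rw [hPdef]
    generalize hL : List.ofFn (fun i : Fin n => A i * Matrix.diagonal (u i)) = L
    have hmem : ∀ M ∈ L, Good M := by
      intro M hM
      rw [← hL, List.mem_ofFn] at hM
      obtain ⟨i, rfl⟩ := hM
      refine Good.mul ⟨hA i, fun k => ?_⟩ ⟨?_, fun k => ?_⟩
      · obtain ⟨l, hl⟩ := hrow i k
        exact Finset.sum_pos' (fun l _ => hA i k l) ⟨l, Finset.mem_univ l, hl⟩
      · intro a b
        by_cases h : a = b <;> simp [Matrix.diagonal_apply, h, le_of_lt (hu i b)]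
      · simpa [Matrix.diagonal_apply] using hu i k
    clear hL
    induction L with
    | nil => exact Good.one
    | cons M L ih =>
      simp only [List.prod_cons]
      exact Good.mul (hmem M (List.mem_cons_self (a := M) (l := L))) (ih fun N hN => hmem N (List.mem_cons_of_mem M hN))
  refine ⟨fun i => ∑ j, P i j, Matrix.of fun i j => P i j / ∑ k, P i k, fun j => hGood.2 j,
    ⟨fun i j => div_nonneg (hGood.1 i j) (le_of_lt (hGood.2 i)), fun i => ?_⟩, ?_⟩
  · simp only [Matrix.of_apply]
    rw [← Finset.sum_div]
    exact div_self (ne_of_gt (hGood.2 i))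
  · ext i j
    simp only [Matrix.diagonal_mul, Matrix.of_apply]
    rw [mul_comm, div_mul_cancel₀ _ (ne_of_gt (hGood.2 i))]
end

section
/- Let P be a stochastic reversible matrix with strictly positive stationary distribution μ_P, and let u be a strictly positive vector. Then the u-Tilted matrix U = D(Pu)^{-1} P D(u) is reversible, and its stationary distribution is μ_U = α · (u ∘ Pu ∘ μ_P), where α = (∑_i u[i] (Pu)[i] μ_P[i])^{-1}. -/
open Matrix

/-- The `u`-Tilted matrix of `A`: `D(Au)⁻¹ A D(u)`. -/
noncomputable def tilted {m : ℕ} (A : Matrix (Fin m) (Fin m) ℝ) (u : Fin m → ℝ) :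
    Matrix (Fin m) (Fin m) ℝ :=
  Matrix.diagonal (fun i => (A.mulVec u i)⁻¹) * A * Matrix.diagonal u

theorem tilted_reversible {m : ℕ}
    (P : Matrix (Fin m) (Fin m) ℝ)
    (hP : ∀ i j, 0 ≤ P i j) (hrow : ∀ i, ∑ j, P i j = 1)
    (μP : Fin m → ℝ) (hμpos : ∀ i, 0 < μP i) (hμsum : ∑ i, μP i = 1)
    (hstat : Matrix.vecMul μP P = μP)
    (hrev : ∀ i j, μP i * P i j = μP j * P j i)
    (u : Fin m → ℝ) (hu : ∀ j, 0 < u j) :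
    let U := tilted P u
    let α := (∑ i, u i * P.mulVec u i * μP i)⁻¹
    let μU := fun i => α * (u i * P.mulVec u i * μP i)
    (∀ i j, μU i * U i j = μU j * U j i) ∧ Matrix.vecMul μU U = μU := by
  intro U α μU
  have hU : ∀ i j, U i j = (P.mulVec u i)⁻¹ * P i j * u j := by
    intro i j
    simp [U, tilted, Matrix.mul_diagonal, Matrix.diagonal_mul]
  have hPu : ∀ i, 0 < P.mulVec u i := by
    intro i
    have hex : ∃ j, 0 < P i j := by
      by_contra h
      push_neg at h
      have : ∀ j ∈ Finset.univ, P i j = 0 := fun j _ => le_antisymm (h j) (hP i j)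
      have := hrow i
      rw [Finset.sum_eq_zero ‹∀ j ∈ Finset.univ, P i j = 0›] at this
      norm_num at this
    obtain ⟨j, hj⟩ := hex
    have : 0 < ∑ k, P i k * u k :=
      Finset.sum_pos' (fun k _ => mul_nonneg (hP i k) (hu k).le)
        ⟨j, Finset.mem_univ j, mul_pos hj (hu j)⟩
    simpa [Matrix.mulVec, dotProduct] using this
  have key : ∀ i j, μU i * U i j = α * (u i * μP i * P i j * u j) := by
    intro i j
    rw [hU]
    have h0 : P.mulVec u i ≠ 0 := (hPu i).ne'
    field_simp [μU]
    ring
  constructor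
  · intro i j
    rw [key i j, key j i]
    linear_combination (α * u i * u j) * hrev i j
  · funext j
    have : Matrix.vecMul μU U j = ∑ i, μU i * U i j := by
      simp [Matrix.vecMul, dotProduct]
    rw [this]
    calc ∑ i, μU i * U i j = ∑ i, α * (u i * μP i * P i j * u j) :=
          Finset.sum_congr rfl fun i _ => key i j
      _ = ∑ i, α * u j * μP j * (P j i * u i) := by
          refine Finset.sum_congr rfl fun i _ => ?_
          linear_combination (α * u i * u j) * hrev i j
      _ = α * u j * μP j * ∑ i, P j i * u i := by rw [Finset.mul_sum]
      _ = μU j := by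
          simp only [μU, Matrix.mulVec, dotProduct]
          ring
end

section
/- Let P be a stochastic reversible matrix with strictly positive stationary distribution μ_P, and let u, v be strictly positive vectors. Define the Tilted matrices U = D(Pu)^{-1} P D(u) and V = D(Pv)^{-1} P D(v). Then W = UV is reversible, with stationary distribution μ_W = α · (Pu ∘ μ_P ∘ v), where α = (∑_i (Pu)[i] μ_P[i] v[i])^{-1}; that is, D(μ_W) W = Wᵀ D(μ_W) and μ_Wᵀ W = μ_Wᵀ. -/
open Matrix

theorem product_of_two_tilted_reversible {m : ℕ}
    (P : Matrix (Fin m) (Fin m) ℝ)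
    (hP : ∀ i j, 0 ≤ P i j) (hrow : ∀ i, ∑ j, P i j = 1)
    (μP : Fin m → ℝ) (hμpos : ∀ i, 0 < μP i) (hμsum : ∑ i, μP i = 1)
    (hstat : Matrix.vecMul μP P = μP)
    (hrev : ∀ i j, μP i * P i j = μP j * P j i)
    (u v : Fin m → ℝ) (hu : ∀ j, 0 < u j) (hv : ∀ j, 0 < v j) :
    let U := tilted P u
    let V := tilted P v
    let W := U * V
    let α := (∑ i, P.mulVec u i * μP i * v i)⁻¹
    let μW := fun i => α * (P.mulVec u i * μP i * v i)
    Matrix.diagonal μW * W = Wᵀ * Matrix.diagonal μW ∧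
      Matrix.vecMul μW W = μW := by
  intro U V W α μW
  -- positivity of P applied to a positive vector
  have hpos : ∀ (w : Fin m → ℝ), (∀ j, 0 < w j) → ∀ i, 0 < P.mulVec w i := by
    intro w hw i
    have hne : ∃ j ∈ Finset.univ, 0 < P i j * w j := by
      by_contra h
      push_neg at h
      have : ∀ j, P i j = 0 := by
        intro j
        have h1 := h j (Finset.mem_univ j)
        have h2 := hP i j
        nlinarith [hw j]
      have h0 := hrow i
      simp [this] at h0
    have : 0 < ∑ j, P i j * w j :=
      Finset.sum_pos' (fun j _ => mul_nonneg (hP i j) (hw j).le) hne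
    simpa [Matrix.mulVec, dotProduct] using this
  have hPu := hpos u hu
  have hPv := hpos v hv
  -- entry formula for W
  have hW : ∀ i j, W i j =
      ∑ k, ((P.mulVec u i)⁻¹ * P i k * u k) * ((P.mulVec v k)⁻¹ * P k j * v j) := by
    intro i j
    have htilt : ∀ (w : Fin m → ℝ) (a b : Fin m),
        tilted P w a b = (P.mulVec w a)⁻¹ * P a b * w b := by
      intro w a b
      simp [tilted, Matrix.mul_diagonal, Matrix.diagonal_mul]
    simp only [W, Matrix.mul_apply, U, V, htilt]
  -- reversibility key identity for P
  have hsym : ∀ i j k, μP i * (P i k * P k j) = μP j * (P j k * P k i) := by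
    intro i j k
    linear_combination P k j * hrev i k + P k i * hrev k j
  -- detailed balance for W with weights μW
  have key : ∀ i j, μW i * W i j = μW j * W j i := by
    intro i j
    rw [hW i j, hW j i, Finset.mul_sum, Finset.mul_sum]
    refine Finset.sum_congr rfl fun k _ => ?_
    have h1 : P.mulVec u i * (P.mulVec u i)⁻¹ = 1 := mul_inv_cancel₀ (hPu i).ne'
    have h2 : P.mulVec u j * (P.mulVec u j)⁻¹ = 1 := mul_inv_cancel₀ (hPu j).ne'
    have hs := hsym i j k
    show α * (P.mulVec u i * μP i * v i) * _ = α * (P.mulVec u j * μP j * v j) * _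
    linear_combination
      (α * v i * v j * u k * (P.mulVec v k)⁻¹ * (μP i * (P i k * P k j))) * h1
      - (α * v i * v j * u k * (P.mulVec v k)⁻¹ * (μP j * (P j k * P k i))) * h2
      + (α * v i * v j * u k * (P.mulVec v k)⁻¹) * hs
  -- rows of W sum to 1
  have hWrow : ∀ i, ∑ j, W i j = 1 := by
    intro i
    have hPw : ∀ (w : Fin m → ℝ) k, ∑ j, P k j * w j = P.mulVec w k := by
      intro w k; simp [Matrix.mulVec, dotProduct]
    calc ∑ j, W i j
        = ∑ j, ∑ k, ((P.mulVec u i)⁻¹ * P i k * u k) *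
            ((P.mulVec v k)⁻¹ * P k j * v j) := by
          exact Finset.sum_congr rfl fun j _ => hW i j
      _ = ∑ k, ∑ j, ((P.mulVec u i)⁻¹ * P i k * u k) *
            ((P.mulVec v k)⁻¹ * P k j * v j) := by rw [Finset.sum_comm]
      _ = ∑ k, ((P.mulVec u i)⁻¹ * P i k * u k) * ((P.mulVec v k)⁻¹ *
            ∑ j, P k j * v j) := by
          refine Finset.sum_congr rfl fun k _ => ?_
          rw [Finset.mul_sum, Finset.mul_sum]
          exact Finset.sum_congr rfl fun j _ => by ring
      _ = ∑ k, (P.mulVec u i)⁻¹ * (P i k * u k) := by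
          refine Finset.sum_congr rfl fun k _ => ?_
          rw [hPw v k, inv_mul_cancel₀ (hPv k).ne']
          ring
      _ = (P.mulVec u i)⁻¹ * ∑ k, P i k * u k := by rw [Finset.mul_sum]
      _ = 1 := by rw [hPw u i, inv_mul_cancel₀ (hPu i).ne']
  constructor
  · ext i j
    rw [Matrix.diagonal_mul, Matrix.mul_diagonal, Matrix.transpose_apply, key i j]
    ring
  · funext j
    calc Matrix.vecMul μW W j = ∑ i, μW i * W i j := by
          simp [Matrix.vecMul, dotProduct]
      _ = ∑ i, μW j * W j i := Finset.sum_congr rfl fun i _ => key i j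
      _ = μW j * ∑ i, W j i := (Finset.mul_sum _ _ _).symm
      _ = μW j := by rw [hWrow j, mul_one]
end

section
/- Let P be a stochastic reversible matrix with strictly positive stationary distribution μ_P, and let u, v be strictly positive vectors. Define U = D(Pu)^{-1} P D(u) and V = D(Pv)^{-1} P D(v). Then the product W = UV is similar to a matrix of the form XᵀX for some real matrix X; consequently all eigenvalues of W are real and nonnegative. -/
open Matrix Polynomial

/-- The multiset of (complex) eigenvalues of a real square matrix. -/
noncomputable def spec {m : ℕ} (M : Matrix (Fin m) (Fin m) ℝ) : Multiset ℂ :=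
  ((M.map (Complex.ofReal)).charpoly).roots

private lemma eval_charpoly_aux {n : ℕ} (M : Matrix (Fin n) (Fin n) ℂ) (t : ℂ) :
    M.charpoly.eval t = (t • (1 : Matrix (Fin n) (Fin n) ℂ) - M).det := by
  rw [Matrix.charpoly, ← Polynomial.coe_evalRingHom, RingHom.map_det]
  congr 1
  ext i j
  by_cases h : i = j <;>
    simp [h, Matrix.charmatrix_apply, Matrix.one_apply, Matrix.diagonal_apply]

private lemma mapC_mul {n : ℕ} (M N : Matrix (Fin n) (Fin n) ℝ) :
    (M * N).map Complex.ofReal = M.map Complex.ofReal * N.map Complex.ofReal := by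
  ext i j
  simp [Matrix.mul_apply, Matrix.map_apply]

open ComplexOrder

theorem tilted_product_similar_psd {m : ℕ}
    (P : Matrix (Fin m) (Fin m) ℝ)
    (hP : ∀ i j, 0 ≤ P i j) (hrow : ∀ i, ∑ j, P i j = 1)
    (μP : Fin m → ℝ) (hμpos : ∀ i, 0 < μP i) (hμsum : ∑ i, μP i = 1)
    (hstat : Matrix.vecMul μP P = μP)
    (hrev : ∀ i j, μP i * P i j = μP j * P j i)
    (u v : Fin m → ℝ) (hu : ∀ j, 0 < u j) (hv : ∀ j, 0 < v j) :
    let W := tilted P u * tilted P v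
    (∃ X S : Matrix (Fin m) (Fin m) ℝ, IsUnit S.det ∧ S * W * S⁻¹ = Xᵀ * X) ∧
      ∀ lam ∈ spec (tilted P u * tilted P v), lam.im = 0 ∧ 0 ≤ lam.re := by
  intro W
  -- positivity of P applied to positive vectors
  have hPvec : ∀ z : Fin m → ℝ, (∀ j, 0 < z j) → ∀ i, 0 < P.mulVec z i := by
    intro z hz i
    have hex : ∃ j : Fin m, 0 < P i j := by
      by_contra h
      push_neg at h
      have : ∑ j, P i j = 0 :=
        Finset.sum_eq_zero fun j _ => le_antisymm (h j) (hP i j)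
      rw [hrow i] at this
      norm_num at this
    obtain ⟨j, hj⟩ := hex
    have : (0 : ℝ) < ∑ j, P i j * z j := by
      refine Finset.sum_pos' (fun j _ => mul_nonneg (hP i j) (hz j).le) ?_
      exact ⟨j, Finset.mem_univ j, mul_pos hj (hz j)⟩
    simpa [Matrix.mulVec, dotProduct] using this
  have hPu : ∀ i, 0 < P.mulVec u i := hPvec u hu
  have hPv : ∀ i, 0 < P.mulVec v i := hPvec v hv
  -- the conjugating matrices
  set a : Fin m → ℝ :=
    fun j => Real.sqrt (μP j) * Real.sqrt (u j) * (Real.sqrt (P.mulVec v j))⁻¹ with ha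
  set b : Fin m → ℝ :=
    fun i => Real.sqrt (v i) * (Real.sqrt (P.mulVec u i) * Real.sqrt (μP i))⁻¹ with hb
  set w : Fin m → ℝ :=
    fun i => Real.sqrt (μP i) * Real.sqrt (P.mulVec u i) * Real.sqrt (v i) with hw
  set X : Matrix (Fin m) (Fin m) ℝ := Matrix.diagonal a * P * Matrix.diagonal b with hXdef
  set S : Matrix (Fin m) (Fin m) ℝ := Matrix.diagonal w with hSdef
  have hwpos : ∀ i, 0 < w i := fun i =>
    mul_pos (mul_pos (Real.sqrt_pos.mpr (hμpos i)) (Real.sqrt_pos.mpr (hPu i)))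
      (Real.sqrt_pos.mpr (hv i))
  have hdetS : IsUnit S.det := by
    rw [hSdef, Matrix.det_diagonal]
    exact (Finset.prod_pos fun i _ => hwpos i).ne'.isUnit
  -- tilted entries
  have htilt : ∀ (z : Fin m → ℝ) (i j : Fin m),
      tilted P z i j = (P.mulVec z i)⁻¹ * P i j * z j := by
    intro z i j
    simp [tilted, Matrix.mul_diagonal, Matrix.diagonal_mul]
  -- the key similarity identity
  have key : S * (tilted P u * tilted P v) = (Xᵀ * X) * S := by
    ext i k
    rw [hSdef, Matrix.diagonal_mul, Matrix.mul_diagonal, Matrix.mul_apply, Matrix.mul_apply,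
      Finset.mul_sum, Finset.sum_mul]
    refine Finset.sum_congr rfl fun j _ => ?_
    rw [htilt, htilt, Matrix.transpose_apply, hXdef]
    rw [Matrix.mul_diagonal, Matrix.mul_diagonal, Matrix.diagonal_mul, Matrix.diagonal_mul]
    have hji : P j i = μP i * P i j * (μP j)⁻¹ := by
      have h0 : μP j ≠ 0 := (hμpos j).ne'
      field_simp
      linear_combination -hrev i j
    rw [hji]
    simp only [ha, hb, hw]
    set A := Real.sqrt (μP i) with hA
    set B := Real.sqrt (μP j) with hB
    set C := Real.sqrt (μP k) with hC
    set D := Real.sqrt (u j) with hD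
    set E := Real.sqrt (v i) with hE
    set F := Real.sqrt (v k) with hF
    set G := Real.sqrt (P.mulVec u i) with hG
    set H := Real.sqrt (P.mulVec u k) with hH
    set K := Real.sqrt (P.mulVec v j) with hK
    have eA : μP i = A ^ 2 := by rw [hA]; exact (Real.sq_sqrt (hμpos i).le).symm
    have eB : μP j = B ^ 2 := by rw [hB]; exact (Real.sq_sqrt (hμpos j).le).symm
    have eD : u j = D ^ 2 := by rw [hD]; exact (Real.sq_sqrt (hu j).le).symm
    have eF : v k = F ^ 2 := by rw [hF]; exact (Real.sq_sqrt (hv k).le).symm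
    have eG : P.mulVec u i = G ^ 2 := by rw [hG]; exact (Real.sq_sqrt (hPu i).le).symm
    have eK : P.mulVec v j = K ^ 2 := by rw [hK]; exact (Real.sq_sqrt (hPv j).le).symm
    rw [eA, eB, eD, eF, eG, eK]
    have hA0 : A ≠ 0 := (Real.sqrt_pos.mpr (hμpos i)).ne'
    have hB0 : B ≠ 0 := (Real.sqrt_pos.mpr (hμpos j)).ne'
    have hC0 : C ≠ 0 := (Real.sqrt_pos.mpr (hμpos k)).ne'
    have hG0 : G ≠ 0 := (Real.sqrt_pos.mpr (hPu i)).ne'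
    have hH0 : H ≠ 0 := (Real.sqrt_pos.mpr (hPu k)).ne'
    have hK0 : K ≠ 0 := (Real.sqrt_pos.mpr (hPv j)).ne'
    field_simp
  -- part 1
  have hsim : S * W * S⁻¹ = Xᵀ * X := by
    show S * (tilted P u * tilted P v) * S⁻¹ = Xᵀ * X
    rw [key, Matrix.mul_assoc, Matrix.mul_nonsing_inv _ hdetS, Matrix.mul_one]
  refine ⟨⟨X, S, hdetS, hsim⟩, ?_⟩
  -- part 2: eigenvalues
  intro lam hlam
  set Wc := (tilted P u * tilted P v).map Complex.ofReal with hWc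
  have hroot : Wc.charpoly.IsRoot lam := by
    have hne : Wc.charpoly ≠ 0 := (Matrix.charpoly_monic Wc).ne_zero
    exact (Polynomial.mem_roots hne).mp hlam
  have hdet0 : (lam • (1 : Matrix (Fin m) (Fin m) ℂ) - Wc).det = 0 := by
    rw [← eval_charpoly_aux]; exact hroot
  obtain ⟨x, hx, hx0⟩ := (Matrix.exists_mulVec_eq_zero_iff).mpr hdet0
  have hxeig : Wc.mulVec x = lam • x := by
    have h := hx0
    rw [Matrix.sub_mulVec, sub_eq_zero, Matrix.smul_mulVec, Matrix.one_mulVec] at h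
    exact h.symm
  -- map matrices to ℂ
  set Sc := S.map Complex.ofReal with hSc
  set Y := X.map Complex.ofReal with hY
  have hYH : Xᵀ.map Complex.ofReal = Yᴴ := by
    ext i j; simp [hY, Matrix.conjTranspose_apply, Complex.conj_ofReal]
  have keyC : Sc * Wc = (Yᴴ * Y) * Sc := by
    rw [hSc, hWc, ← mapC_mul, key, mapC_mul, mapC_mul, hYH]
  set y := Sc.mulVec x with hy
  have hdetSc : Sc.det ≠ 0 := by
    rw [hSc, show S.map Complex.ofReal = Complex.ofRealHom.mapMatrix S from rfl,
      ← RingHom.map_det]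
    simpa using hdetS.ne_zero
  have hy0 : y ≠ 0 := by
    intro h
    exact hdetSc (Matrix.exists_mulVec_eq_zero_iff.mp ⟨x, hx, h⟩)
  have hyeig : (Yᴴ * Y).mulVec y = lam • y := by
    rw [hy, Matrix.mulVec_mulVec, ← keyC, ← Matrix.mulVec_mulVec, hxeig, Matrix.mulVec_smul]
  have hpsd := Matrix.posSemidef_conjTranspose_mul_self Y
  have h2 : 0 ≤ star y ⬝ᵥ (Yᴴ * Y).mulVec y := hpsd.dotProduct_mulVec_nonneg y
  rw [hyeig] at h2
  have hdot : star y ⬝ᵥ (lam • y) = lam * ((∑ i, Complex.normSq (y i) : ℝ) : ℂ) := by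
    simp only [dotProduct_smul, smul_eq_mul]
    congr 1
    push_cast
    simp [dotProduct, Complex.normSq_eq_conj_mul_self]
  rw [hdot] at h2
  set r : ℝ := ∑ i, Complex.normSq (y i) with hr
  have hrpos : 0 < r := by
    obtain ⟨i, hi⟩ := Function.ne_iff.mp hy0
    refine Finset.sum_pos' (fun i _ => Complex.normSq_nonneg _) ?_
    exact ⟨i, Finset.mem_univ i, Complex.normSq_pos.mpr hi⟩
  rw [Complex.le_def] at h2
  simp only [Complex.zero_re, Complex.zero_im, Complex.mul_re, Complex.mul_im,
    Complex.ofReal_re, Complex.ofReal_im, mul_zero, zero_mul, add_zero, sub_zero,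
    zero_add] at h2
  obtain ⟨h2a, h2b⟩ := h2
  have h2a' : 0 ≤ r * lam.re := by linarith [h2a, mul_comm lam.re r]
  refine ⟨?_, nonneg_of_mul_nonneg_right h2a' hrpos⟩
  rcases mul_eq_zero.mp h2b.symm with h | h
  · exact h
  · exact absurd h hrpos.ne'
end

section
/- Let P_1, P_2 be m×m stochastic matrices with all entries of P_2 strictly positive. Then there exists a strictly positive vector u ∈ R^m with P_1 = D(P_2 u)^{-1} P_2 D(u) if and only if the entrywise quotient matrix M[i,j] = P_1[i,j]/P_2[i,j] has rank at most 1 with strictly positive entries (i.e., M = y xᵀ for some strictly positive vectors y, x). -/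
open Matrix

theorem tilted_iff_rank_one_quotient {m : ℕ}
    (P₁ P₂ : Matrix (Fin m) (Fin m) ℝ)
    (hP₁ : ∀ i j, 0 ≤ P₁ i j) (hrow₁ : ∀ i, ∑ j, P₁ i j = 1)
    (hP₂ : ∀ i j, 0 < P₂ i j) (hrow₂ : ∀ i, ∑ j, P₂ i j = 1) :
    (∃ u : Fin m → ℝ, (∀ j, 0 < u j) ∧
        P₁ = Matrix.diagonal (fun i => (P₂.mulVec u i)⁻¹) * P₂ * Matrix.diagonal u) ↔
      (∃ y x : Fin m → ℝ, (∀ i, 0 < y i) ∧ (∀ j, 0 < x j) ∧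
        ∀ i j, P₁ i j / P₂ i j = y i * x j) := by
  constructor
  · rintro ⟨u, hu, hPe⟩
    have hmv : ∀ i : Fin m, 0 < P₂.mulVec u i := by
      intro i
      have : Nonempty (Fin m) := ⟨i⟩
      exact Finset.sum_pos (fun j _ => mul_pos (hP₂ i j) (hu j)) Finset.univ_nonempty
    refine ⟨fun i => (P₂.mulVec u i)⁻¹, u, fun i => inv_pos.mpr (hmv i), hu, fun i j => ?_⟩
    have h : P₁ i j = (P₂.mulVec u i)⁻¹ * P₂ i j * u j := by
      rw [hPe, Matrix.mul_diagonal, Matrix.diagonal_mul]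
    rw [h, div_eq_iff (hP₂ i j).ne']
    ring
  · rintro ⟨y, x, hy, hx, h⟩
    have hP : ∀ i j, P₁ i j = y i * x j * P₂ i j := by
      intro i j
      have := h i j
      field_simp [(hP₂ i j).ne'] at this
      linarith [this]
    have key : ∀ i, y i * P₂.mulVec x i = 1 := by
      intro i
      have : ∑ j, P₁ i j = y i * ∑ j, P₂ i j * x j := by
        rw [Finset.mul_sum]
        exact Finset.sum_congr rfl (fun j _ => by rw [hP i j]; ring)
      rw [hrow₁ i] at this
      show y i * ∑ j, P₂ i j * x j = 1
      linarith [this]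
    refine ⟨x, hx, ?_⟩
    ext i j
    have hyinv : (P₂.mulVec x i)⁻¹ = y i := by
      have hk := key i
      have : P₂.mulVec x i = (y i)⁻¹ := by
        field_simp [(hy i).ne']
        linarith [hk]
      rw [this, inv_inv]
    rw [Matrix.mul_diagonal, Matrix.diagonal_mul, hyinv, hP i j]
    ring
end

section
/- Let P be a stochastic reversible matrix with strictly positive stationary distribution, and u a strictly positive vector. Let U = D(Pu)^{-1} P D(u) be the u-Tilted matrix. Then |λ_2(U)| ≤ |λ_2(P)| · (max_i u[i] / min_i u[i])^2, where λ_2 denotes a second-largest-in-modulus eigenvalue. -/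
open Matrix Polynomial

/-- `lam` is an eigenvalue of second largest modulus of `M`. -/
noncomputable def IsSecondEig {m : ℕ} (M : Matrix (Fin m) (Fin m) ℝ) (lam : ℂ) : Prop :=
  ∃ lam₁ ∈ spec M, lam ∈ (spec M).erase lam₁ ∧
    (∀ x ∈ spec M, ‖x‖ ≤ ‖lam₁‖) ∧
    (∀ x ∈ (spec M).erase lam₁, ‖x‖ ≤ ‖lam‖)

/-! ### Auxiliary lemmas -/

/-- Characteristic polynomial is invariant under conjugation. -/
lemma my_charpoly_conj {n : Type*} [Fintype n] [DecidableEq n] {R : Type*} [CommRing R]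
    (M N N' : Matrix n n R) (h : N * N' = 1) (h' : N' * N = 1) :
    (N * M * N').charpoly = M.charpoly := by
  have hc : charmatrix (N * M * N') =
      ((C : R →+* R[X]).mapMatrix N) * charmatrix M * ((C : R →+* R[X]).mapMatrix N') := by
    unfold charmatrix
    have h1 : ((C : R →+* R[X]).mapMatrix (N * M * N'))
        = ((C : R →+* R[X]).mapMatrix N) * ((C : R →+* R[X]).mapMatrix M)
          * ((C : R →+* R[X]).mapMatrix N') := by
      simp [_root_.map_mul]
    have h2 : ((C : R →+* R[X]).mapMatrix N) * (Matrix.scalar n (X : R[X]))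
          * ((C : R →+* R[X]).mapMatrix N') = Matrix.scalar n (X : R[X]) := by
      have hcomm : ((C : R →+* R[X]).mapMatrix N) * (Matrix.scalar n (X : R[X]))
          = (Matrix.scalar n (X : R[X])) * ((C : R →+* R[X]).mapMatrix N) := by
        rw [scalar_commute]
        · exact fun r => Commute.all _ _
      rw [hcomm, mul_assoc, ← _root_.map_mul, h, _root_.map_one, mul_one]
    rw [h1, mul_sub, sub_mul, h2]
  rw [Matrix.charpoly, Matrix.charpoly, hc, det_mul, det_mul]
  have hdet : ((C : R →+* R[X]).mapMatrix N).det * ((C : R →+* R[X]).mapMatrix N').det = 1 := by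
    rw [← det_mul, ← _root_.map_mul, h, _root_.map_one, det_one]
  calc ((C : R →+* R[X]).mapMatrix N).det * (charmatrix M).det
        * ((C : R →+* R[X]).mapMatrix N').det
      = (((C : R →+* R[X]).mapMatrix N).det * ((C : R →+* R[X]).mapMatrix N').det)
        * (charmatrix M).det := by ring
    _ = (charmatrix M).det := by rw [hdet, one_mul]

lemma my_spec_eq_of_charpoly {m : ℕ} {M N : Matrix (Fin m) (Fin m) ℝ}
    (h : M.charpoly = N.charpoly) : spec M = spec N := by
  unfold spec
  have hM : M.map Complex.ofReal = M.map (Complex.ofRealHom : ℝ →+* ℂ) := rfl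
  have hN : N.map Complex.ofReal = N.map (Complex.ofRealHom : ℝ →+* ℂ) := rfl
  rw [hM, hN, Matrix.charpoly_map, Matrix.charpoly_map, h]

lemma my_diag_conj_spec {m : ℕ} (d : Fin m → ℝ) (hd : ∀ i, d i ≠ 0)
    (M : Matrix (Fin m) (Fin m) ℝ) :
    spec (Matrix.diagonal d * M * Matrix.diagonal (fun i => (d i)⁻¹)) = spec M := by
  apply my_spec_eq_of_charpoly
  apply my_charpoly_conj
  · rw [diagonal_mul_diagonal]
    convert Matrix.diagonal_one using 2
    funext i
    exact mul_inv_cancel₀ (hd i)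
  · rw [diagonal_mul_diagonal]
    convert Matrix.diagonal_one using 2
    funext i
    exact inv_mul_cancel₀ (hd i)

lemma my_charpoly_diagonal {n : Type*} [Fintype n] [DecidableEq n] {R : Type*} [CommRing R]
    (d : n → R) : (Matrix.diagonal d).charpoly = ∏ i, (X - C (d i)) := by
  have h : charmatrix (Matrix.diagonal d) = Matrix.diagonal (fun i => (X : R[X]) - C (d i)) := by
    ext i j
    by_cases hij : i = j
    · subst hij; simp
    · simp [charmatrix_apply_ne _ _ _ hij, Matrix.diagonal_apply_ne _ hij]
  rw [Matrix.charpoly, h, det_diagonal]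

/-- The spectrum of a real Hermitian matrix is the multiset of its eigenvalues. -/
lemma my_spec_hermitian {m : ℕ} (A : Matrix (Fin m) (Fin m) ℝ) (hA : A.IsHermitian) :
    spec A = Finset.univ.val.map (fun i => ((hA.eigenvalues i : ℝ) : ℂ)) := by
  have h1 : A.charpoly = ∏ i, (X - C (hA.eigenvalues i)) := by
    have hV := (Matrix.mem_unitaryGroup_iff).mp (hA.eigenvectorUnitary).2
    have hV' := (Matrix.mem_unitaryGroup_iff').mp (hA.eigenvectorUnitary).2
    calc A.charpoly
        = ((hA.eigenvectorUnitary : Matrix (Fin m) (Fin m) ℝ)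
            * Matrix.diagonal (RCLike.ofReal ∘ hA.eigenvalues)
            * (star (hA.eigenvectorUnitary : Matrix (Fin m) (Fin m) ℝ))).charpoly := by
          conv_lhs => rw [hA.spectral_theorem, Unitary.conjStarAlgAut_apply]
      _ = (Matrix.diagonal (RCLike.ofReal ∘ hA.eigenvalues)).charpoly :=
          my_charpoly_conj _ _ _ hV hV'
      _ = ∏ i, (X - C (hA.eigenvalues i)) := by
          rw [my_charpoly_diagonal]
          congr 1
  unfold spec
  have hM : A.map Complex.ofReal = A.map (Complex.ofRealHom : ℝ →+* ℂ) := rfl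
  rw [hM, Matrix.charpoly_map, h1, Polynomial.map_prod]
  simp only [Polynomial.map_sub, Polynomial.map_X, Polynomial.map_C]
  have h2 : (∏ i, ((X : ℂ[X]) - C (Complex.ofRealHom (hA.eigenvalues i))))
      = ((Finset.univ.val.map (fun i => ((hA.eigenvalues i : ℝ) : ℂ))).map
          (fun a => (X : ℂ[X]) - C a)).prod := by
    rw [Multiset.map_map]
    rfl
  rw [h2, Polynomial.roots_multiset_prod_X_sub_C]

/-- Key multiset lemma: the second-largest-modulus bound does not depend on
which top element is erased. -/
lemma my_second_bound (s : Multiset ℂ) (lam₁ lam a : ℂ) (hl1 : lam₁ ∈ s)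
    (hsec : ∀ x ∈ s.erase lam₁, ‖x‖ ≤ ‖lam‖)
    (ha : a ∈ s) (hatop : ∀ x ∈ s, ‖x‖ ≤ ‖a‖) :
    ∀ x ∈ s.erase a, ‖x‖ ≤ ‖lam‖ := by
  intro x hx
  by_cases hmem : x ∈ s.erase lam₁
  · exact hsec x hmem
  have hxs : x ∈ s := Multiset.mem_of_mem_erase hx
  have hxeq : x = lam₁ := by
    by_contra hne
    exact hmem ((Multiset.mem_erase_of_ne hne).2 hxs)
  by_cases hal : a = lam₁
  · rw [hal] at hx
    exact absurd hx hmem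
  · have haer : a ∈ s.erase lam₁ := (Multiset.mem_erase_of_ne hal).2 ha
    rw [hxeq]
    exact le_trans (hatop _ hl1) (hsec a haer)

lemma my_erase_map_univ {m : ℕ} {β : Type*} [DecidableEq β] (f : Fin m → β) (i : Fin m) :
    ((Finset.univ.val.map f).erase (f i)) = (Finset.univ.val.erase i).map f := by
  have h : i ∈ (Finset.univ : Finset (Fin m)).val := Finset.mem_univ i
  conv_lhs => rw [show (Finset.univ : Finset (Fin m)).val
      = i ::ₘ (Finset.univ : Finset (Fin m)).val.erase i from (Multiset.cons_erase h).symm,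
    Multiset.map_cons, Multiset.erase_cons_head]

/-- Parseval for sums of squares. -/
lemma my_normsq_repr {m : ℕ} (b : OrthonormalBasis (Fin m) ℝ (EuclideanSpace ℝ (Fin m)))
    (z : EuclideanSpace ℝ (Fin m)) :
    ∑ k, z k ^ 2 = ∑ k, (b.repr z k) ^ 2 := by
  have h1 : ∀ (y : EuclideanSpace ℝ (Fin m)), ∑ k, y k ^ 2 = ‖y‖ ^ 2 := by
    intro y
    rw [EuclideanSpace.norm_eq, Real.sq_sqrt (Finset.sum_nonneg fun _ _ => sq_nonneg _)]
    exact Finset.sum_congr rfl fun k _ => by rw [Real.norm_eq_abs, sq_abs]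
  rw [h1 z, ← b.repr.norm_map z, ← h1 (b.repr z)]

lemma my_repr_mulVec {m : ℕ} (A : Matrix (Fin m) (Fin m) ℝ) (hA : A.IsHermitian)
    (x : EuclideanSpace ℝ (Fin m)) (k : Fin m) :
    hA.eigenvectorBasis.repr
      ((WithLp.equiv 2 (Fin m → ℝ)).symm (A *ᵥ ((WithLp.equiv 2 (Fin m → ℝ)) x))) k
      = hA.eigenvalues k * hA.eigenvectorBasis.repr x k := by
  have hsymm := (Matrix.isHermitian_iff_isSymmetric.1 hA)
  rw [OrthonormalBasis.repr_apply_apply, OrthonormalBasis.repr_apply_apply]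
  have h1 : (WithLp.equiv 2 (Fin m → ℝ)).symm (A *ᵥ ((WithLp.equiv 2 (Fin m → ℝ)) x))
      = Matrix.toEuclideanLin A x := (Matrix.toEuclideanLin_apply A x).symm
  rw [h1]
  have h2 : (inner ℝ (hA.eigenvectorBasis k) (Matrix.toEuclideanLin A x) : ℝ)
      = inner ℝ (Matrix.toEuclideanLin A (hA.eigenvectorBasis k)) x := (hsymm _ _).symm
  rw [h2]
  have h3 : Matrix.toEuclideanLin A (hA.eigenvectorBasis k)
      = hA.eigenvalues k • hA.eigenvectorBasis k := by
    rw [Matrix.toEuclideanLin_apply]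
    exact congrArg (WithLp.equiv 2 (Fin m → ℝ)).symm (hA.mulVec_eigenvectorBasis k)
  rw [h3, real_inner_smul_left]

lemma my_sum_sq_mulVec {m : ℕ} (A : Matrix (Fin m) (Fin m) ℝ) (hA : A.IsHermitian)
    (x : EuclideanSpace ℝ (Fin m)) :
    ∑ k, ((A *ᵥ ((WithLp.equiv 2 (Fin m → ℝ)) x)) k) ^ 2
      = ∑ k, (hA.eigenvalues k * hA.eigenvectorBasis.repr x k) ^ 2 := by
  have h := my_normsq_repr hA.eigenvectorBasis
    ((WithLp.equiv 2 (Fin m → ℝ)).symm (A *ᵥ ((WithLp.equiv 2 (Fin m → ℝ)) x)))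
  simp only [WithLp.equiv_symm_apply, WithLp.ofLp_toLp] at h
  rw [h]
  exact Finset.sum_congr rfl fun k _ => congrArg (· ^ 2) (my_repr_mulVec A hA x k)

theorem tilted_second_eigenvalue_bound {m : ℕ} [NeZero m]
    (P : Matrix (Fin m) (Fin m) ℝ)
    (hP : ∀ i j, 0 ≤ P i j) (hrow : ∀ i, ∑ j, P i j = 1)
    (μP : Fin m → ℝ) (hμpos : ∀ i, 0 < μP i) (hμsum : ∑ i, μP i = 1)
    (hstat : Matrix.vecMul μP P = μP)
    (hrev : ∀ i j, μP i * P i j = μP j * P j i)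
    (u : Fin m → ℝ) (hu : ∀ j, 0 < u j)
    (lamU lamP : ℂ)
    (hlamU : IsSecondEig (tilted P u) lamU)
    (hlamP : IsSecondEig P lamP) :
    ‖lamU‖ ≤ ‖lamP‖ * ((⨆ i, u i) / (⨅ i, u i)) ^ 2 := by
  classical
  obtain ⟨lam1U, hlam1Umem, hlamUmem, htopU, -⟩ := hlamU
  obtain ⟨lam1P, hlam1Pmem, hlamPmem, htopP, hsecP⟩ := hlamP
  have hne : Nonempty (Fin m) := ⟨⟨0, Nat.pos_of_ne_zero (NeZero.ne m)⟩⟩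
  have sqrt_eq : ∀ a b : ℝ, 0 ≤ a → 0 ≤ b → a ^ 2 = b ^ 2 → a = b := by
    intro a b ha hb h
    rw [← Real.sqrt_sq ha, ← Real.sqrt_sq hb, h]
  set Mu := ⨆ i, u i with hMudef
  set mu := ⨅ i, u i with hmudef
  have hbdd : BddAbove (Set.range u) := (Set.finite_range u).bddAbove
  have hbddb : BddBelow (Set.range u) := (Set.finite_range u).bddBelow
  have hle : ∀ i, u i ≤ Mu := fun i => le_ciSup hbdd i
  have hge : ∀ i, mu ≤ u i := fun i => ciInf_le hbddb i
  have hmupos : 0 < mu := by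
    obtain ⟨i, hi⟩ := Finite.exists_min u
    exact lt_of_lt_of_le (hu i) (le_ciInf hi)
  have hMupos : 0 < Mu :=
    lt_of_lt_of_le hmupos (le_trans (hge (Classical.arbitrary _)) (hle (Classical.arbitrary _)))
  set r := Mu / mu with hrdef
  have hrpos : 0 < r := div_pos hMupos hmupos
  have hr1 : 1 ≤ r := (one_le_div hmupos).2
    (le_trans (hge (Classical.arbitrary _)) (hle (Classical.arbitrary _)))
  set g := P.mulVec u with hgdef
  have hgsum : ∀ i, g i = ∑ j, P i j * u j := by
    intro i
    rw [hgdef]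
    simp [Matrix.mulVec, dotProduct]
  have hglb : ∀ i, mu ≤ g i := by
    intro i
    rw [hgsum]
    calc mu = ∑ j, P i j * mu := by rw [← Finset.sum_mul, hrow, one_mul]
      _ ≤ ∑ j, P i j * u j :=
        Finset.sum_le_sum fun j _ => mul_le_mul_of_nonneg_left (hge j) (hP i j)
  have hgub : ∀ i, g i ≤ Mu := by
    intro i
    rw [hgsum]
    calc ∑ j, P i j * u j ≤ ∑ j, P i j * Mu :=
        Finset.sum_le_sum fun j _ => mul_le_mul_of_nonneg_left (hle j) (hP i j)
      _ = Mu := by rw [← Finset.sum_mul, hrow, one_mul]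
  have hgpos : ∀ i, 0 < g i := fun i => lt_of_lt_of_le hmupos (hglb i)
  set w := fun i => Real.sqrt (u i / g i) with hwdef
  have hwpos : ∀ i, 0 < w i := fun i => Real.sqrt_pos.2 (div_pos (hu i) (hgpos i))
  have hwsq : ∀ i, w i ^ 2 = u i / g i :=
    fun i => Real.sq_sqrt (le_of_lt (div_pos (hu i) (hgpos i)))
  have hwle : ∀ i, w i ^ 2 ≤ r := by
    intro i
    rw [hwsq]
    exact div_le_div₀ (le_of_lt hMupos) (hle i) hmupos (hglb i)
  set sm := fun i => Real.sqrt (μP i) with hsmdef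
  have hsmpos : ∀ i, 0 < sm i := fun i => Real.sqrt_pos.2 (hμpos i)
  have hsmsq : ∀ i, sm i ^ 2 = μP i := fun i => Real.sq_sqrt (le_of_lt (hμpos i))
  set pv := fun i => μP i * u i * g i with hpvdef
  have hpvpos : ∀ i, 0 < pv i := fun i => mul_pos (mul_pos (hμpos i) (hu i)) (hgpos i)
  set sp := fun i => Real.sqrt (pv i) with hspdef
  have hsppos : ∀ i, 0 < sp i := fun i => Real.sqrt_pos.2 (hpvpos i)
  have hspsq : ∀ i, sp i ^ 2 = pv i := fun i => Real.sq_sqrt (le_of_lt (hpvpos i))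
  set S := Matrix.diagonal sm * P * Matrix.diagonal (fun i => (sm i)⁻¹) with hSdef
  set T := Matrix.diagonal sp * (tilted P u) * Matrix.diagonal (fun i => (sp i)⁻¹) with hTdef
  have hSspec : spec S = spec P := my_diag_conj_spec sm (fun i => ne_of_gt (hsmpos i)) P
  have hTspec : spec T = spec (tilted P u) :=
    my_diag_conj_spec sp (fun i => ne_of_gt (hsppos i)) (tilted P u)
  have hSentry : ∀ i j, S i j = sm i * P i j * (sm j)⁻¹ := by
    intro i j
    rw [hSdef, Matrix.mul_diagonal, Matrix.diagonal_mul]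
  have hSentry_sq : ∀ i j, (sm i * P i j * (sm j)⁻¹) ^ 2 = P j i * P i j := by
    intro i j
    rw [mul_pow, mul_pow, inv_pow, hsmsq, hsmsq]
    have h1 : μP j ≠ 0 := ne_of_gt (hμpos j)
    field_simp
    linear_combination P i j * hrev i j
  have hSHerm : S.IsHermitian := by
    show Sᴴ = S
    ext i j
    rw [Matrix.conjTranspose_apply, star_trivial, hSentry, hSentry]
    apply sqrt_eq
    · exact mul_nonneg (mul_nonneg (le_of_lt (hsmpos j)) (hP j i))
        (inv_nonneg.2 (le_of_lt (hsmpos i)))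
    · exact mul_nonneg (mul_nonneg (le_of_lt (hsmpos i)) (hP i j))
        (inv_nonneg.2 (le_of_lt (hsmpos j)))
    · rw [hSentry_sq, hSentry_sq]
      ring
  have hTilted : ∀ i j, tilted P u i j = (g i)⁻¹ * P i j * u j := by
    intro i j
    rw [tilted, Matrix.mul_diagonal, Matrix.diagonal_mul]
  have hTentry : ∀ i j, T i j = sp i * ((g i)⁻¹ * P i j * u j) * (sp j)⁻¹ := by
    intro i j
    rw [hTdef, Matrix.mul_diagonal, Matrix.diagonal_mul, hTilted]
  have hTDW : T = Matrix.diagonal w * S * Matrix.diagonal w := by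
    ext i j
    rw [Matrix.mul_diagonal, Matrix.diagonal_mul, hTentry, hSentry]
    have hgi := ne_of_gt (hgpos i)
    have hgj := ne_of_gt (hgpos j)
    have hmi := ne_of_gt (hμpos i)
    have hmj := ne_of_gt (hμpos j)
    have hui := ne_of_gt (hu i)
    have huj := ne_of_gt (hu j)
    have hC : sp i * (g i)⁻¹ * u j * (sp j)⁻¹ = w i * sm i * (sm j)⁻¹ * w j := by
      apply sqrt_eq
      · exact mul_nonneg (mul_nonneg (mul_nonneg (le_of_lt (hsppos i))
          (inv_nonneg.2 (le_of_lt (hgpos i)))) (le_of_lt (hu j)))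
          (inv_nonneg.2 (le_of_lt (hsppos j)))
      · exact mul_nonneg (mul_nonneg (mul_nonneg (le_of_lt (hwpos i))
          (le_of_lt (hsmpos i))) (inv_nonneg.2 (le_of_lt (hsmpos j)))) (le_of_lt (hwpos j))
      · simp only [mul_pow, inv_pow, hspsq, hsmsq, hwsq, hpvdef]
        field_simp
    calc sp i * ((g i)⁻¹ * P i j * u j) * (sp j)⁻¹
        = P i j * (sp i * (g i)⁻¹ * u j * (sp j)⁻¹) := by ring
      _ = P i j * (w i * sm i * (sm j)⁻¹ * w j) := by rw [hC]
      _ = w i * (sm i * P i j * (sm j)⁻¹) * w j := by ring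
  have hWst : (Matrix.diagonal w)ᴴ = Matrix.diagonal w := by
    rw [Matrix.diagonal_conjTranspose]
    simp
  have hTHerm : T.IsHermitian := by
    show Tᴴ = T
    rw [hTDW, Matrix.conjTranspose_mul, Matrix.conjTranspose_mul, hWst, hSHerm, ← mul_assoc]
  -- spectra via eigenvalues
  have hspecP : spec P = Finset.univ.val.map (fun k => ((hSHerm.eigenvalues k : ℝ) : ℂ)) :=
    hSspec.symm.trans (my_spec_hermitian S hSHerm)
  have hspecU : spec (tilted P u)
      = Finset.univ.val.map (fun k => ((hTHerm.eigenvalues k : ℝ) : ℂ)) :=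
    hTspec.symm.trans (my_spec_hermitian T hTHerm)
  set lp := ‖lamP‖ with hlpdef
  have hlp0 : 0 ≤ lp := norm_nonneg _
  -- choose a top eigenvalue index for S
  obtain ⟨i0, hi0max⟩ := Finite.exists_max (fun k => |hSHerm.eigenvalues k|)
  have hfS_mem : ((hSHerm.eigenvalues i0 : ℝ) : ℂ) ∈ spec P := by
    rw [hspecP]
    exact Multiset.mem_map_of_mem _ (Finset.mem_univ i0)
  have htopi0 : ∀ x ∈ spec P, ‖x‖ ≤ ‖((hSHerm.eigenvalues i0 : ℝ) : ℂ)‖ := by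
    intro x hx
    rw [hspecP] at hx
    obtain ⟨k, -, rfl⟩ := Multiset.mem_map.1 hx
    rw [Complex.norm_real, Complex.norm_real, Real.norm_eq_abs, Real.norm_eq_abs]
    exact hi0max k
  have hsecS : ∀ k, k ≠ i0 → |hSHerm.eigenvalues k| ≤ lp := by
    intro k hk
    have h := my_second_bound (spec P) lam1P lamP _ hlam1Pmem hsecP hfS_mem htopi0
    have hmem : ((hSHerm.eigenvalues k : ℝ) : ℂ)
        ∈ (spec P).erase ((hSHerm.eigenvalues i0 : ℝ) : ℂ) := by
      rw [hspecP, my_erase_map_univ]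
      exact Multiset.mem_map_of_mem _ ((Multiset.mem_erase_of_ne hk).2 (Finset.mem_univ k))
    have h2 := h _ hmem
    rwa [Complex.norm_real, Real.norm_eq_abs] at h2
  set K := lp * r with hKdef
  have hK0 : 0 ≤ K := mul_nonneg hlp0 (le_of_lt hrpos)
  have hdiagb : ∀ f : Fin m → ℝ, ∑ k, (w k * f k) ^ 2 ≤ r * ∑ k, (f k) ^ 2 := by
    intro f
    rw [Finset.mul_sum]
    apply Finset.sum_le_sum
    intro k _
    rw [mul_pow]
    exact mul_le_mul_of_nonneg_right (hwle k) (sq_nonneg _)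
  set v := fun k => w k * (hSHerm.eigenvectorBasis i0) k with hvdef
  have HT : ∀ x : EuclideanSpace ℝ (Fin m), (∑ k, x k * v k = 0) →
      ∑ k, ((T *ᵥ ((WithLp.equiv 2 (Fin m → ℝ)) x)) k) ^ 2 ≤ K ^ 2 * ∑ k, (x k) ^ 2 := by
    intro x hx
    set xf := (WithLp.equiv 2 (Fin m → ℝ)) x with hxf
    set yf := fun k => w k * xf k with hyf
    set y : EuclideanSpace ℝ (Fin m) := (WithLp.equiv 2 (Fin m → ℝ)).symm yf with hy
    have hxfk : ∀ k, xf k = x k := fun k => rfl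
    have hyk : ∀ k, y k = yf k := fun k => rfl
    have hin : Matrix.diagonal w *ᵥ xf = yf := by
      funext l
      rw [Matrix.mulVec_diagonal]
    have h1 : T *ᵥ xf = fun k => w k * ((S *ᵥ yf) k) := by
      rw [hTDW, ← Matrix.mulVec_mulVec, ← Matrix.mulVec_mulVec, hin]
      funext k
      rw [Matrix.mulVec_diagonal]
    have hrepr0 : hSHerm.eigenvectorBasis.repr y i0 = 0 := by
      rw [OrthonormalBasis.repr_apply_apply]
      have hinner : (inner ℝ (hSHerm.eigenvectorBasis i0) y : ℝ)
          = ∑ k, (hSHerm.eigenvectorBasis i0) k * y k := by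
        rw [PiLp.inner_apply]
        exact Finset.sum_congr rfl fun k _ => by
          rw [RCLike.inner_apply, RCLike.conj_to_real, mul_comm]
      rw [hinner]
      calc ∑ k, (hSHerm.eigenvectorBasis i0) k * y k
          = ∑ k, x k * v k := by
            apply Finset.sum_congr rfl
            intro k _
            rw [hyk]
            show (hSHerm.eigenvectorBasis i0) k * (w k * xf k) = _
            rw [hxfk, hvdef]
            ring
        _ = 0 := hx
    have hSy : ∑ k, ((S *ᵥ yf) k) ^ 2 ≤ lp ^ 2 * ∑ k, (yf k) ^ 2 := by
      have heq : ∑ k, ((S *ᵥ yf) k) ^ 2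
          = ∑ k, (hSHerm.eigenvalues k * hSHerm.eigenvectorBasis.repr y k) ^ 2 := by
        have h := my_sum_sq_mulVec S hSHerm y
        rw [show (WithLp.equiv 2 (Fin m → ℝ)) y = yf from Equiv.apply_symm_apply _ _] at h
        exact h
      rw [heq]
      have h2 : ∑ k, (hSHerm.eigenvalues k * hSHerm.eigenvectorBasis.repr y k) ^ 2
          ≤ ∑ k, lp ^ 2 * (hSHerm.eigenvectorBasis.repr y k) ^ 2 := by
        apply Finset.sum_le_sum
        intro k _
        by_cases hk : k = i0
        · subst hk
          rw [hrepr0]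
          simp
        · rw [mul_pow]
          apply mul_le_mul_of_nonneg_right _ (sq_nonneg _)
          calc hSHerm.eigenvalues k ^ 2 = |hSHerm.eigenvalues k| ^ 2 := (sq_abs _).symm
            _ ≤ lp ^ 2 := pow_le_pow_left₀ (abs_nonneg _) (hsecS k hk) 2
      calc ∑ k, (hSHerm.eigenvalues k * hSHerm.eigenvectorBasis.repr y k) ^ 2
          ≤ ∑ k, lp ^ 2 * (hSHerm.eigenvectorBasis.repr y k) ^ 2 := h2
        _ = lp ^ 2 * ∑ k, (hSHerm.eigenvectorBasis.repr y k) ^ 2 := by rw [Finset.mul_sum]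
        _ = lp ^ 2 * ∑ k, (y k) ^ 2 := by rw [← my_normsq_repr]
        _ = lp ^ 2 * ∑ k, (yf k) ^ 2 := by
            exact congrArg _ (Finset.sum_congr rfl fun k _ => by rw [hyk])
    calc ∑ k, ((T *ᵥ xf) k) ^ 2 = ∑ k, (w k * ((S *ᵥ yf) k)) ^ 2 := by rw [h1]
      _ ≤ r * ∑ k, ((S *ᵥ yf) k) ^ 2 := hdiagb _
      _ ≤ r * (lp ^ 2 * ∑ k, (yf k) ^ 2) := mul_le_mul_of_nonneg_left hSy (le_of_lt hrpos)
      _ = (r * lp ^ 2) * ∑ k, (w k * xf k) ^ 2 := by rw [← mul_assoc]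
      _ ≤ (r * lp ^ 2) * (r * ∑ k, (xf k) ^ 2) :=
          mul_le_mul_of_nonneg_left (hdiagb xf) (mul_nonneg (le_of_lt hrpos) (sq_nonneg _))
      _ = K ^ 2 * ∑ k, (xf k) ^ 2 := by rw [hKdef]; ring
      _ = K ^ 2 * ∑ k, (x k) ^ 2 := rfl
  -- identify the two largest eigenvalues of T
  have hlamU_spec : lamU ∈ spec (tilted P u) := Multiset.mem_of_mem_erase hlamUmem
  rw [hspecU] at hlam1Umem htopU hlamUmem hlamU_spec
  obtain ⟨i, -, hfi⟩ := Multiset.mem_map.1 hlam1Umem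
  rw [← hfi, my_erase_map_univ] at hlamUmem
  obtain ⟨j, hj, hfj⟩ := Multiset.mem_map.1 hlamUmem
  have hji : j ≠ i := by
    intro hji
    rw [hji] at hj
    exact (Finset.univ.nodup).notMem_erase hj
  have hkey : ‖lamU‖ ≤ K := by
    by_contra hcon
    push_neg at hcon
    have habsj : |hTHerm.eigenvalues j| = ‖lamU‖ := by
      rw [← hfj, Complex.norm_real, Real.norm_eq_abs]
    have habsi : ‖lamU‖ ≤ |hTHerm.eigenvalues i| := by
      calc ‖lamU‖ ≤ ‖lam1U‖ := htopU lamU hlamU_spec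
        _ = |hTHerm.eigenvalues i| := by rw [← hfi, Complex.norm_real, Real.norm_eq_abs]
    have hjgt : K ^ 2 < hTHerm.eigenvalues j ^ 2 := by
      rw [← sq_abs (hTHerm.eigenvalues j), habsj]
      exact pow_lt_pow_left₀ hcon hK0 (by norm_num)
    have higt : K ^ 2 < hTHerm.eigenvalues i ^ 2 := by
      rw [← sq_abs (hTHerm.eigenvalues i)]
      exact lt_of_lt_of_le (pow_lt_pow_left₀ hcon hK0 (by norm_num))
        (pow_le_pow_left₀ (norm_nonneg _) habsi 2)
    have hij' : i ≠ j := fun h => hji h.symm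
    set al := ∑ k, (hTHerm.eigenvectorBasis i) k * v k with hal
    by_cases hal0 : al = 0
    · have h := HT (hTHerm.eigenvectorBasis i) hal0
      have hreprx : hTHerm.eigenvectorBasis.repr (hTHerm.eigenvectorBasis i)
          = EuclideanSpace.single i (1 : ℝ) := hTHerm.eigenvectorBasis.repr_self i
      have hLHS : ∑ k, ((T *ᵥ ((WithLp.equiv 2 (Fin m → ℝ)) (hTHerm.eigenvectorBasis i))) k) ^ 2
          = hTHerm.eigenvalues i ^ 2 := by
        rw [my_sum_sq_mulVec T hTHerm, hreprx]
        have hterm : ∀ k, (hTHerm.eigenvalues k * EuclideanSpace.single i (1 : ℝ) k) ^ 2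
            = if k = i then hTHerm.eigenvalues i ^ 2 else 0 := by
          intro k
          rw [EuclideanSpace.single_apply]
          by_cases hk : k = i
          · subst hk; simp
          · simp [hk]
        rw [Finset.sum_congr rfl fun k _ => hterm k,
          Finset.sum_ite_eq' Finset.univ i fun _ => hTHerm.eigenvalues i ^ 2]
        simp
      have hRHS : ∑ k, ((hTHerm.eigenvectorBasis i) k) ^ 2 = 1 := by
        rw [my_normsq_repr hTHerm.eigenvectorBasis, hreprx]
        have hterm : ∀ k, (EuclideanSpace.single i (1 : ℝ) k) ^ 2
            = if k = i then 1 else 0 := by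
          intro k
          rw [EuclideanSpace.single_apply]
          by_cases hk : k = i
          · subst hk; simp
          · simp [hk]
        rw [Finset.sum_congr rfl fun k _ => hterm k,
          Finset.sum_ite_eq' Finset.univ i fun _ => (1 : ℝ)]
        simp
      rw [hLHS, hRHS, mul_one] at h
      exact absurd h (not_le.2 higt)
    · set be := ∑ k, (hTHerm.eigenvectorBasis j) k * v k with hbe
      set x : EuclideanSpace ℝ (Fin m) :=
        be • hTHerm.eigenvectorBasis i - al • hTHerm.eigenvectorBasis j with hxdef
      have hxk : ∀ k, x k = be * (hTHerm.eigenvectorBasis i) k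
          - al * (hTHerm.eigenvectorBasis j) k := by
        intro k
        rw [hxdef]
        simp
      have hx : ∑ k, x k * v k = 0 := by
        calc ∑ k, x k * v k
            = ∑ k, (be * ((hTHerm.eigenvectorBasis i) k * v k)
              - al * ((hTHerm.eigenvectorBasis j) k * v k)) := by
              apply Finset.sum_congr rfl
              intro k _
              rw [hxk]
              ring
          _ = be * al - al * be := by
              rw [Finset.sum_sub_distrib, ← Finset.mul_sum, ← Finset.mul_sum, ← hal, ← hbe]
          _ = 0 := by ring
      have hreprx : ∀ k, hTHerm.eigenvectorBasis.repr x k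
          = be * (if k = i then 1 else 0) - al * (if k = j then 1 else 0) := by
        intro k
        rw [hxdef, map_sub, _root_.map_smul, _root_.map_smul, hTHerm.eigenvectorBasis.repr_self,
          hTHerm.eigenvectorBasis.repr_self]
        simp [EuclideanSpace.single_apply]
      have hsqx : ∀ k, (hTHerm.eigenvectorBasis.repr x k) ^ 2
          = (if k = i then be ^ 2 else 0) + (if k = j then al ^ 2 else 0) := by
        intro k
        rw [hreprx]
        by_cases hki : k = i <;> by_cases hkj : k = j
        · exact absurd (hkj.symm.trans hki) hji
        · simp [hki, hkj, hij', hji]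
        · simp [hki, hkj, hij', hji]
        · simp [hki, hkj, hij', hji]
      have hnx : ∑ k, (x k) ^ 2 = be ^ 2 + al ^ 2 := by
        rw [my_normsq_repr hTHerm.eigenvectorBasis,
          Finset.sum_congr rfl fun k _ => hsqx k, Finset.sum_add_distrib,
          Finset.sum_ite_eq' Finset.univ i fun _ => be ^ 2,
          Finset.sum_ite_eq' Finset.univ j fun _ => al ^ 2]
        simp
      have hTx : ∑ k, ((T *ᵥ ((WithLp.equiv 2 (Fin m → ℝ)) x)) k) ^ 2
          = hTHerm.eigenvalues i ^ 2 * be ^ 2 + hTHerm.eigenvalues j ^ 2 * al ^ 2 := by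
        rw [my_sum_sq_mulVec T hTHerm x]
        have hterm : ∀ k, (hTHerm.eigenvalues k * hTHerm.eigenvectorBasis.repr x k) ^ 2
            = (if k = i then hTHerm.eigenvalues i ^ 2 * be ^ 2 else 0)
              + (if k = j then hTHerm.eigenvalues j ^ 2 * al ^ 2 else 0) := by
          intro k
          rw [mul_pow, hsqx]
          by_cases hki : k = i <;> by_cases hkj : k = j
          · exact absurd (hkj.symm.trans hki) hji
          · subst hki
            simp [hij', hji]
          · subst hkj
            simp [hij', hji]
          · simp [hki, hkj]
        rw [Finset.sum_congr rfl fun k _ => hterm k, Finset.sum_add_distrib,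
          Finset.sum_ite_eq' Finset.univ i fun _ => hTHerm.eigenvalues i ^ 2 * be ^ 2,
          Finset.sum_ite_eq' Finset.univ j fun _ => hTHerm.eigenvalues j ^ 2 * al ^ 2]
        simp
      have h := HT x hx
      rw [hTx, hnx] at h
      have hal2 : 0 < al ^ 2 := lt_of_le_of_ne (sq_nonneg al) (Ne.symm (pow_ne_zero 2 hal0))
      nlinarith [mul_le_mul_of_nonneg_right (le_of_lt higt) (sq_nonneg be),
        mul_lt_mul_of_pos_right hjgt hal2]
  calc ‖lamU‖ ≤ K := hkey
    _ = lp * r := rfl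
    _ ≤ lp * r ^ 2 := by nlinarith [hlp0, hr1, hrpos]
end
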